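/- Let Λ be a discrete group with a proper, integer-valued length function L, and set C_n := {γ ∈ Λ : L(γ) = n} (each C_n is finite by properness). Let (B,ν) be a probability space carrying a measurable Λ-action leaving ν quasi-invariant, with Koopman representation π and Harish-Chandra function Ξ. Assume: (1) there is a polynomial P with real coefficients such that for every n with C_n ≠ ∅ one has sup_{γ∈C_n} Ξ(γ) ≤ P(n)/√|C_n|; and (2) there is M ∈ ℝ such that for every n with C_n ≠ ∅, the operator (1/|C_n|) Σ_{γ∈C_n} π(γ)/Ξ(γ) on L²(B,ν) has operator norm at most M. Then Λ has radial rapid decay with respect to L: there is a polynomial Q such that for every radial finitely supported f : Λ → ℂ, the convolution operator norm satisfies ⦀f⦀ ≤ Q(L(f))·‖f‖₂. -/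

import Mathlib

open MeasureTheory
open scoped ENNReal

namespace Stmt0

variable {G : Type*} [Group G]

/-- Convolution of a finitely supported function with an arbitrary function. -/
noncomputable def conv (f : G →₀ ℂ) (ξ : G → ℂ) : G → ℂ :=
  fun g => ∑ h ∈ f.support, f h * ξ (h⁻¹ * g)

/-- The operator norm of the convolution operator `ξ ↦ f * ξ` on `ℓ²(G)` is at most `C`. -/
noncomputable def ConvOpNormLE (f : G →₀ ℂ) (C : ℝ) : Prop :=
  ∀ ξ : lp (fun _ : G => ℂ) 2, ∃ hmem : Memℓp (conv f (ξ : ∀ _ : G, ℂ)) 2,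
    ‖(⟨conv f (ξ : ∀ _ : G, ℂ), hmem⟩ : lp (fun _ : G => ℂ) 2)‖ ≤ C * ‖ξ‖

/-- The ℓ²-norm of a finitely supported function. -/
noncomputable def l2norm (f : G →₀ ℂ) : ℝ :=
  Real.sqrt (∑ g ∈ f.support, ‖f g‖ ^ 2)

/-- `L(f) = max {L g : f g ≠ 0}`. -/
noncomputable def lenOf (L : G → ℝ) (f : G →₀ ℂ) : ℝ :=
  sSup (L '' {g | f g ≠ 0})

def IsLengthFun (L : G → ℝ) : Prop :=
  L 1 = 0 ∧ (∀ g, 0 ≤ L g) ∧ (∀ g, L g⁻¹ = L g) ∧ ∀ g h, L (g * h) ≤ L g + L h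

def Radial (L : G → ℝ) (f : G →₀ ℂ) : Prop :=
  ∀ g₁ g₂, L g₁ = L g₂ → f g₁ = f g₂

/-- Radial rapid decay with respect to `L`. -/
def HasRRD (L : G → ℝ) : Prop :=
  ∃ Q : Polynomial ℝ, ∀ f : G →₀ ℂ, Radial L f →
    ConvOpNormLE f (Q.eval (lenOf L f) * l2norm f)

end Stmt0

/-!
A radial `f` is `∑ₙ aₙ 𝟙_{Cₙ}`, so it suffices to bound convolution by `𝟙_{Cₙ}` by
`M P(n) √|Cₙ|`: Cauchy–Schwarz over `n ≤ L(f)` then gives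
`⦀f⦀ ≤ ‖f‖₂ (∑_{n ≤ L(f)} (M P(n))²)^{1/2}`, which is polynomial in `L(f)`.

For the sphere bound, lift `0 ≤ u ∈ ℓ²(Λ)` to `U(b) = (∑ₓ u(x)² c(x⁻¹,b))^{1/2} ∈ L²(B)`, which
has the same norm because each `c(x⁻¹,·)` has integral one. The cocycle identity
`c((γx)⁻¹, b) = c(γ⁻¹, b) c(x⁻¹, γ⁻¹b)` and Cauchy–Schwarz give `∑_g u(γ⁻¹g) v(g) ≤ ⟨π(γ)U, V⟩`.
Dividing by `Ξ(γ) ≤ P(n)/√|Cₙ|` and summing over `γ ∈ Cₙ`,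
`(√|Cₙ|/P(n)) ⟨𝟙_{Cₙ} * u, v⟩ ≤ ⟨∑_γ π(γ)U/Ξ(γ), V⟩ ≤ |Cₙ| M ‖u‖₂ ‖v‖₂`.
-/

open MeasureTheory Measure Finset
open scoped ENNReal

lemma sum_weighted_mul_le_sqrt_mul_sqrt {ι : Type*} (s : Finset ι) (f g w : ι → ℝ)
    (hw : ∀ i ∈ s, 0 ≤ w i) :
    ∑ i ∈ s, f i * g i * w i ≤ √(∑ i ∈ s, f i ^ 2 * w i) * √(∑ i ∈ s, g i ^ 2 * w i) := by
  have key := Real.sum_mul_le_sqrt_mul_sqrt s (fun i => f i * √(w i)) (fun i => g i * √(w i))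
  have hsq : ∀ h : ι → ℝ, ∑ i ∈ s, (h i * √(w i)) ^ 2 = ∑ i ∈ s, h i ^ 2 * w i :=
    fun h => sum_congr rfl fun i hi => by rw [mul_pow, Real.sq_sqrt (hw i hi)]
  rw [hsq, hsq] at key
  refine (sum_congr rfl fun i hi => ?_).trans_le key
  rw [mul_mul_mul_comm, Real.mul_self_sqrt (hw i hi)]

lemma Polynomial.abs_eval_le_of_le (P : Polynomial ℝ) {t s : ℝ} (ht : 0 ≤ t) (hts : t ≤ s) :
    |P.eval t| ≤ (∑ i ∈ range (P.natDegree + 1), |P.coeff i|) * (s + 1) ^ P.natDegree := by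
  rw [Polynomial.eval_eq_sum_range, Finset.sum_mul]
  refine (abs_sum_le_sum_abs _ _).trans (sum_le_sum fun i hi => ?_)
  rw [abs_mul, abs_of_nonneg (pow_nonneg ht i)]
  gcongr
  calc t ^ i ≤ (s + 1) ^ i := by gcongr; linarith
    _ ≤ (s + 1) ^ P.natDegree :=
        pow_le_pow_right₀ (by linarith) (Nat.lt_succ_iff.1 (mem_range.1 hi))

lemma Polynomial.exists_sqrt_sum_range_sq_le (P : Polynomial ℝ) :
    ∃ Q : Polynomial ℝ, ∀ N : ℕ, √(∑ n ∈ range (N + 1), P.eval (n : ℝ) ^ 2) ≤ Q.eval (N : ℝ) := by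
  set A := ∑ i ∈ range (P.natDegree + 1), |P.coeff i|
  refine ⟨Polynomial.C A * (Polynomial.X + 1) ^ (P.natDegree + 1), fun N => ?_⟩
  have hA : 0 ≤ A := sum_nonneg fun i _ => abs_nonneg _
  have hN : (0 : ℝ) ≤ N := N.cast_nonneg
  simp only [Polynomial.eval_mul, Polynomial.eval_C, Polynomial.eval_pow, Polynomial.eval_add,
    Polynomial.eval_X, Polynomial.eval_one]
  refine Real.sqrt_le_iff.2 ⟨by positivity, ?_⟩
  calc ∑ n ∈ range (N + 1), P.eval (n : ℝ) ^ 2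
      ≤ ∑ n ∈ range (N + 1), (A * (N + 1) ^ P.natDegree) ^ 2 := by
        refine sum_le_sum fun n hn => ?_
        have h := P.abs_eval_le_of_le n.cast_nonneg
          (by exact_mod_cast Nat.lt_succ_iff.1 (mem_range.1 hn) : (n : ℝ) ≤ N)
        exact sq_le_sq' (neg_le_of_abs_le h) (le_of_abs_le h)
    _ = (N + 1) * (A * (N + 1) ^ P.natDegree) ^ 2 := by simp
    _ ≤ ((N + 1) * (A * (N + 1) ^ P.natDegree)) ^ 2 := by
        rw [mul_pow (_ + _ : ℝ)]
        gcongr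
        nlinarith
    _ = (A * (N + 1) ^ (P.natDegree + 1)) ^ 2 := by ring

namespace Stmt0

variable {G : Type*} {L : G → ℝ}

lemma Radial.exists_eq_comp [Group G] {f : G →₀ ℂ} (hf : Radial L f) :
    ∃ a : ℝ → ℂ, ∀ g, f g = a (L g) := by
  classical
  refine ⟨fun t => if h : ∃ g, L g = t then f h.choose else 0, fun g => ?_⟩
  have h : ∃ g', L g' = L g := ⟨g, rfl⟩
  simp only [dif_pos h]
  exact hf g _ h.choose_spec.symm

lemma exists_nat_lenOf_eq [Group G] (hint : ∀ g, ∃ n : ℕ, L g = n) (f : G →₀ ℂ) :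
    ∃ N : ℕ, lenOf L f = N ∧ ∀ g, f g ≠ 0 → L g ≤ N := by
  have hfin : (L '' {g | f g ≠ 0}).Finite :=
    (f.hasFiniteSupport : (Function.support f).Finite).image L
  rcases (L '' {g | f g ≠ 0}).eq_empty_or_nonempty with h | h
  · exact ⟨0, by simp [lenOf, h], fun g hg =>
      (Set.eq_empty_iff_forall_notMem.1 h _ (Set.mem_image_of_mem L hg)).elim⟩
  · obtain ⟨g₀, -, hg₀⟩ := h.csSup_mem hfin
    obtain ⟨N, hN⟩ := hint g₀
    refine ⟨N, by rw [lenOf, ← hg₀, hN], fun g hg => ?_⟩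
    rw [← hN, hg₀]
    exact le_csSup hfin.bddAbove (Set.mem_image_of_mem L hg)

lemma sum_support_eq_sum_range_sum_sphere (hint : ∀ g, ∃ n : ℕ, L g = n)
    (hfin : ∀ n : ℕ, {g : G | L g = n}.Finite) {f : G →₀ ℂ} {N : ℕ}
    (hN : ∀ g, f g ≠ 0 → L g ≤ N) (X : G → ℝ) :
    ∑ h ∈ f.support, ‖f h‖ * X h =
      ∑ n ∈ range (N + 1), ∑ γ ∈ (hfin n).toFinset, ‖f γ‖ * X γ := by
  classical
  have hdisj : Set.PairwiseDisjoint ↑(range (N + 1)) fun n => (hfin n).toFinset :=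
    fun n _ m _ hnm => disjoint_left.2 fun γ hn hm => hnm <| by
      have hn' : L γ = n := (hfin n).mem_toFinset.1 hn
      have hm' : L γ = m := (hfin m).mem_toFinset.1 hm
      exact_mod_cast hn'.symm.trans hm'
  rw [← sum_biUnion hdisj]
  refine sum_subset (fun g hg => ?_) fun g _ hg => by simp [Finsupp.notMem_support_iff.1 hg]
  obtain ⟨n, hn⟩ := hint g
  have hle : (n : ℝ) ≤ N := hn ▸ hN g (Finsupp.mem_support_iff.1 hg)
  exact mem_biUnion.2 ⟨n, mem_range.2 (Nat.lt_succ_of_le (by exact_mod_cast hle)),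
    (hfin n).mem_toFinset.2 hn⟩

lemma l2norm_eq_sqrt_sum_sphere [Group G] (hint : ∀ g, ∃ n : ℕ, L g = n)
    (hfin : ∀ n : ℕ, {g : G | L g = n}.Finite) {f : G →₀ ℂ} {a : ℝ → ℂ}
    (ha : ∀ g, f g = a (L g)) {N : ℕ} (hN : ∀ g, f g ≠ 0 → L g ≤ N) :
    l2norm f = √(∑ n ∈ range (N + 1), (‖a n‖ * √(#(hfin n).toFinset)) ^ 2) := by
  rw [l2norm]
  simp only [sq (‖f _‖), sum_support_eq_sum_range_sum_sphere hint hfin hN]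
  congr 1
  refine sum_congr rfl fun n _ => ?_
  rw [sum_congr rfl fun γ hγ => by rw [ha, (hfin n).mem_toFinset.1 hγ], sum_const, nsmul_eq_mul,
    mul_pow, Real.sq_sqrt (Nat.cast_nonneg _)]
  ring

lemma sum_norm_conv_mul_le [Group G] (hint : ∀ g, ∃ n : ℕ, L g = n)
    (hfin : ∀ n : ℕ, {g : G | L g = n}.Finite) (t : ℕ → ℝ) {f : G →₀ ℂ} (hf : Radial L f)
    {N : ℕ} (hN : ∀ g, f g ≠ 0 → L g ≤ N) (ξ : lp (fun _ : G => ℂ) 2)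
    (hsphere : ∀ n, (hfin n).toFinset.Nonempty → ∀ (F : Finset G) (v : G → ℝ), 0 ≤ v →
      ∑ γ ∈ (hfin n).toFinset, ∑ g ∈ F, ‖ξ (γ⁻¹ * g)‖ * v g ≤
        t n * √(#(hfin n).toFinset) * ‖ξ‖ * √(∑ g ∈ F, v g ^ 2))
    (F : Finset G) {v : G → ℝ} (hv : 0 ≤ v) :
    ∑ g ∈ F, ‖conv f ξ g‖ * v g ≤
      l2norm f * √(∑ n ∈ range (N + 1), t n ^ 2) * ‖ξ‖ * √(∑ g ∈ F, v g ^ 2) := by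
  obtain ⟨a, ha⟩ := hf.exists_eq_comp
  set S : ℕ → Finset G := fun n => (hfin n).toFinset
  set V := √(∑ g ∈ F, v g ^ 2)
  have hsphere' (n : ℕ) :
      ∑ γ ∈ S n, ∑ g ∈ F, ‖ξ (γ⁻¹ * g)‖ * v g ≤ t n * √(#(S n)) * ‖ξ‖ * V := by
    rcases (S n).eq_empty_or_nonempty with h | h
    · simp [h]
    · exact hsphere n h F v hv
  calc ∑ g ∈ F, ‖conv f ξ g‖ * v g
      ≤ ∑ g ∈ F, (∑ h ∈ f.support, ‖f h‖ * ‖ξ (h⁻¹ * g)‖) * v g := by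
        refine sum_le_sum fun g _ => mul_le_mul_of_nonneg_right ?_ (hv g)
        exact (norm_sum_le _ _).trans_eq (sum_congr rfl fun h _ => norm_mul _ _)
    _ = ∑ h ∈ f.support, ‖f h‖ * ∑ g ∈ F, ‖ξ (h⁻¹ * g)‖ * v g := by
        simp only [Finset.sum_mul, Finset.mul_sum, mul_assoc]
        exact Finset.sum_comm
    _ = ∑ n ∈ range (N + 1), ‖a n‖ * ∑ γ ∈ S n, ∑ g ∈ F, ‖ξ (γ⁻¹ * g)‖ * v g := by
        rw [sum_support_eq_sum_range_sum_sphere hint hfin hN]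
        refine sum_congr rfl fun n _ => ?_
        rw [Finset.mul_sum]
        exact sum_congr rfl fun γ hγ => by rw [ha, (hfin n).mem_toFinset.1 hγ]
    _ ≤ ∑ n ∈ range (N + 1), ‖a n‖ * (t n * √(#(S n)) * ‖ξ‖ * V) := by
        gcongr with n
        exact hsphere' n
    _ = (∑ n ∈ range (N + 1), ‖a n‖ * √(#(S n)) * t n) * (‖ξ‖ * V) := by
        rw [Finset.sum_mul]
        exact sum_congr rfl fun n _ => by ring
    _ ≤ (√(∑ n ∈ range (N + 1), (‖a n‖ * √(#(S n))) ^ 2) *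
          √(∑ n ∈ range (N + 1), t n ^ 2)) * (‖ξ‖ * V) := by
        gcongr
        exact Real.sum_mul_le_sqrt_mul_sqrt _ _ _
    _ = l2norm f * √(∑ n ∈ range (N + 1), t n ^ 2) * ‖ξ‖ * V := by
        rw [l2norm_eq_sqrt_sum_sphere hint hfin ha hN]
        ring

lemma convOpNormLE_of_sum_norm_mul_le [Group G] {f : G →₀ ℂ} {K : ℝ} (hK : 0 ≤ K)
    (h : ∀ (ξ : lp (fun _ : G => ℂ) 2) (F : Finset G) (v : G → ℝ), 0 ≤ v →
      ∑ g ∈ F, ‖conv f ξ g‖ * v g ≤ K * ‖ξ‖ * √(∑ g ∈ F, v g ^ 2)) :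
    ConvOpNormLE f K := by
  intro ξ
  have hsq : ∀ F : Finset G,
      ∑ g ∈ F, ‖conv f ξ g‖ ^ (2 : ℝ≥0∞).toReal ≤ (K * ‖ξ‖) ^ (2 : ℝ≥0∞).toReal := by
    intro F
    simp only [ENNReal.toReal_ofNat, Real.rpow_two]
    have hT := h ξ F (fun g => ‖conv f ξ g‖) fun g => norm_nonneg _
    simp only [← sq] at hT
    have hs := Real.sq_sqrt (sum_nonneg fun g (_ : g ∈ F) => sq_nonneg ‖conv f ξ g‖)
    -- `T ≤ c √T` forces `√T ≤ c`
    nlinarith [Real.sqrt_nonneg (∑ g ∈ F, ‖conv f ξ g‖ ^ 2), norm_nonneg ξ]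
  exact ⟨memℓp_gen' hsq, lp.norm_le_of_forall_sum_le (by norm_num) (by positivity) hsq⟩

end Stmt0

section SqrtL2

variable {B : Type*} [MeasurableSpace B] {ν : Measure B} {f : B → ℝ}

lemma memLp_two_sqrt (hf : Integrable f ν) (h0 : 0 ≤ f) : MemLp (fun b => √(f b)) 2 ν :=
  (memLp_two_iff_integrable_sq hf.1.aemeasurable.sqrt.aestronglyMeasurable).2 <|
    hf.congr (ae_of_all _ fun b => (Real.sq_sqrt (h0 b)).symm)

lemma eLpNorm_two_sqrt (hf : Integrable f ν) (h0 : 0 ≤ f) :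
    eLpNorm (fun b => √(f b)) 2 ν = ENNReal.ofReal √(∫ b, f b ∂ν) := by
  rw [(memLp_two_sqrt hf h0).eLpNorm_eq_integral_rpow_norm two_ne_zero ENNReal.ofNat_ne_top,
    Real.sqrt_eq_rpow]
  congr 2
  · refine integral_congr_ae (ae_of_all _ fun b => ?_)
    simp [Real.sq_sqrt (h0 b)]
  · norm_num

end SqrtL2

lemma ofReal_integral_mul_le_eLpNorm_mul_eLpNorm {B : Type*} [MeasurableSpace B] {ν : Measure B}
    {f g : B → ℝ} (hf : AEStronglyMeasurable f ν) (hg : AEStronglyMeasurable g ν) :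
    ENNReal.ofReal (∫ b, f b * g b ∂ν) ≤ eLpNorm f 2 ν * eLpNorm g 2 ν := by
  calc ENNReal.ofReal (∫ b, f b * g b ∂ν) ≤ ‖∫ b, f b * g b ∂ν‖ₑ := by
        rw [Real.enorm_eq_ofReal_abs]
        exact ENNReal.ofReal_le_ofReal (le_abs_self _)
    _ ≤ eLpNorm (fun b => f b * g b) 1 ν := by
        rw [eLpNorm_one_eq_lintegral_enorm]
        exact enorm_integral_le_lintegral_enorm _
    _ ≤ eLpNorm f 2 ν * eLpNorm g 2 ν := by
        simpa using eLpNorm_le_eLpNorm_mul_eLpNorm'_of_norm (p := 2) (q := 2) (r := 1) hf hg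
          (· * ·) 1 (ae_of_all _ fun b => by simp [norm_mul])

section Koopman

variable {Λ B : Type*} [Group Λ] [MeasurableSpace B] [MulAction Λ B] (ν : Measure B)

/-- The density `d(γ_*ν)/dν`, that is `c(γ⁻¹, ·)` for the Radon–Nikodym cocycle `c`. -/
noncomputable def rnCocycle (γ : Λ) (b : B) : ℝ :=
  ((ν.map (γ • ·)).rnDeriv ν b).toReal

noncomputable def harishChandra (γ : Λ) : ℝ :=
  ∫ b, √(rnCocycle ν γ b) ∂ν

noncomputable def koopman (γ : Λ) (h : B → ℂ) (b : B) : ℂ :=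
  (√(rnCocycle ν γ b) : ℂ) * h (γ⁻¹ • b)

noncomputable def koopmanAverage (C : Finset Λ) (h : B → ℂ) (b : B) : ℂ :=
  (#C : ℂ)⁻¹ * ∑ γ ∈ C, koopman ν γ h b / harishChandra ν γ

noncomputable def cocycleLift (E : Finset Λ) (u : Λ → ℝ) (b : B) : ℝ :=
  √(∑ x ∈ E, u x ^ 2 * rnCocycle ν x b)

/-- `∑_{γ ∈ C} π(γ) U / Ξ(γ)` for the lift `U = cocycleLift ν E u`. -/
noncomputable def koopmanSumLift (C E : Finset Λ) (u : Λ → ℝ) (b : B) : ℝ :=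
  ∑ γ ∈ C, √(rnCocycle ν γ b) * cocycleLift ν E u (γ⁻¹ • b) / harishChandra ν γ

lemma rnCocycle_nonneg (γ : Λ) (b : B) : 0 ≤ rnCocycle ν γ b :=
  ENNReal.toReal_nonneg

lemma measurable_rnCocycle (γ : Λ) : Measurable (rnCocycle ν γ) :=
  (measurable_rnDeriv _ _).ennreal_toReal

lemma integrable_rnCocycle [IsFiniteMeasure ν] (γ : Λ) : Integrable (rnCocycle ν γ) ν :=
  integrable_toReal_rnDeriv

lemma cocycleLift_nonneg (E : Finset Λ) (u : Λ → ℝ) (b : B) : 0 ≤ cocycleLift ν E u b :=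
  Real.sqrt_nonneg _

lemma measurable_cocycleLift (E : Finset Λ) (u : Λ → ℝ) : Measurable (cocycleLift ν E u) :=
  (Finset.measurable_sum E fun x _ => (measurable_rnCocycle ν x).const_mul _).sqrt

variable [MeasurableConstSMul Λ B]

lemma measurable_koopmanSumLift (C E : Finset Λ) (u : Λ → ℝ) :
    Measurable (koopmanSumLift ν C E u) :=
  Finset.measurable_sum C fun γ _ => ((measurable_rnCocycle ν γ).sqrt.mul
    ((measurable_cocycleLift ν E u).comp (measurable_const_smul γ⁻¹))).div_const _

lemma rnCocycle_mul_ae [IsFiniteMeasure ν] (hq : ∀ γ : Λ, ν.map (γ • ·) ≪ ν) (γ x : Λ) :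
    rnCocycle ν (γ * x) =ᵐ[ν] fun b => rnCocycle ν γ b * rnCocycle ν x (γ⁻¹ • b) := by
  have hmap : ν.map ((γ * x) • ·) = (ν.map (x • ·)).map (γ • ·) := by
    rw [map_map (measurable_const_smul γ) (measurable_const_smul x)]
    simp only [Function.comp_def, mul_smul]
  have htrans : ∀ᵐ b ∂ν, (ν.map ((γ * x) • ·)).rnDeriv (ν.map (γ • ·)) b
      = (ν.map (x • ·)).rnDeriv ν (γ⁻¹ • b) := by
    have hγ' : QuasiMeasurePreserving (γ⁻¹ • ·) ν ν := ⟨measurable_const_smul _, hq γ⁻¹⟩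
    filter_upwards [hγ'.ae ((measurableEmbedding_const_smul γ).rnDeriv_map (ν.map (x • ·)) ν)]
      with b hb
    rwa [smul_inv_smul, ← hmap] at hb
  have hchain := rnDeriv_mul_rnDeriv (κ := ν) (hmap ▸ (hq x).map (measurable_const_smul γ))
  filter_upwards [htrans, hchain] with b hb hb'
  simp only [rnCocycle, ← ENNReal.toReal_mul, ← hb', Pi.mul_apply, hb, mul_comm]

lemma sum_mul_rnCocycle_le_ae [IsFiniteMeasure ν] (hq : ∀ γ : Λ, ν.map (γ • ·) ≪ ν) (γ : Λ)
    {F E : Finset Λ} (hFE : ∀ g ∈ F, γ⁻¹ * g ∈ E) (u v : Λ → ℝ) :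
    ∀ᵐ b ∂ν, ∑ g ∈ F, u (γ⁻¹ * g) * v g * rnCocycle ν g b ≤
      √(rnCocycle ν γ b) * cocycleLift ν E u (γ⁻¹ • b) * cocycleLift ν F v b := by
  classical
  filter_upwards [(Filter.eventually_all_finset E).2 fun x _ => rnCocycle_mul_ae ν hq γ x]
    with b hb
  have htranslate : ∑ g ∈ F, u (γ⁻¹ * g) ^ 2 * rnCocycle ν g b ≤
      rnCocycle ν γ b * cocycleLift ν E u (γ⁻¹ • b) ^ 2 := by
    rw [cocycleLift, Real.sq_sqrt (sum_nonneg fun x _ =>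
      mul_nonneg (sq_nonneg _) (rnCocycle_nonneg ν x _)), Finset.mul_sum]
    calc ∑ g ∈ F, u (γ⁻¹ * g) ^ 2 * rnCocycle ν g b
        = ∑ x ∈ F.image (γ⁻¹ * ·), u x ^ 2 * rnCocycle ν (γ * x) b := by
          rw [sum_image fun _ _ _ _ => mul_left_cancel]
          simp only [mul_inv_cancel_left]
      _ ≤ ∑ x ∈ E, u x ^ 2 * rnCocycle ν (γ * x) b :=
          sum_le_sum_of_subset_of_nonneg (image_subset_iff.2 hFE) fun x _ _ =>
            mul_nonneg (sq_nonneg _) (rnCocycle_nonneg ν _ b)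
      _ = ∑ x ∈ E, rnCocycle ν γ b * (u x ^ 2 * rnCocycle ν x (γ⁻¹ • b)) :=
          sum_congr rfl fun x hx => by rw [hb x hx]; ring
  calc ∑ g ∈ F, u (γ⁻¹ * g) * v g * rnCocycle ν g b
      ≤ √(∑ g ∈ F, u (γ⁻¹ * g) ^ 2 * rnCocycle ν g b) * cocycleLift ν F v b :=
        sum_weighted_mul_le_sqrt_mul_sqrt F _ _ _ fun g _ => rnCocycle_nonneg ν g b
    _ ≤ √(rnCocycle ν γ b * cocycleLift ν E u (γ⁻¹ • b) ^ 2) * cocycleLift ν F v b := by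
        gcongr
        exact cocycleLift_nonneg ν F v b
    _ = √(rnCocycle ν γ b) * cocycleLift ν E u (γ⁻¹ • b) * cocycleLift ν F v b := by
        rw [Real.sqrt_mul (rnCocycle_nonneg ν γ b), Real.sqrt_sq (cocycleLift_nonneg ν E u _)]

variable [IsProbabilityMeasure ν]

lemma integral_rnCocycle {γ : Λ} (hγ : ν.map (γ • ·) ≪ ν) : ∫ b, rnCocycle ν γ b ∂ν = 1 := by
  have := isProbabilityMeasure_map (μ := ν) (measurable_const_smul γ).aemeasurable
  unfold rnCocycle
  rw [integral_toReal_rnDeriv hγ, probReal_univ]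

lemma harishChandra_pos {γ : Λ} (hγ : ν.map (γ • ·) ≪ ν) : 0 < harishChandra ν γ := by
  have hsupp : 0 < ν (Function.support (rnCocycle ν γ)) := by
    rw [← integral_pos_iff_support_of_nonneg (rnCocycle_nonneg ν γ) (integrable_rnCocycle ν γ),
      integral_rnCocycle ν hγ]
    exact one_pos
  refine (integral_pos_iff_support_of_nonneg (fun b => Real.sqrt_nonneg _)
    ((memLp_two_sqrt (integrable_rnCocycle ν γ) (rnCocycle_nonneg ν γ)).integrable
      one_le_two)).2 ?_
  convert hsupp using 2
  ext b
  simp [Real.sqrt_eq_zero (rnCocycle_nonneg ν γ b)]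

lemma integral_sum_mul_rnCocycle (hq : ∀ γ : Λ, ν.map (γ • ·) ≪ ν) (E : Finset Λ) (w : Λ → ℝ) :
    ∫ b, ∑ x ∈ E, w x * rnCocycle ν x b ∂ν = ∑ x ∈ E, w x := by
  rw [integral_finsetSum E fun x _ => (integrable_rnCocycle ν x).const_mul _]
  simp only [integral_const_mul, integral_rnCocycle ν (hq _), mul_one]

lemma memLp_cocycleLift_and_eLpNorm_eq (hq : ∀ γ : Λ, ν.map (γ • ·) ≪ ν) (E : Finset Λ)
    (u : Λ → ℝ) :
    MemLp (cocycleLift ν E u) 2 ν ∧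
      eLpNorm (cocycleLift ν E u) 2 ν = ENNReal.ofReal √(∑ x ∈ E, u x ^ 2) := by
  have hint : Integrable (fun b => ∑ x ∈ E, u x ^ 2 * rnCocycle ν x b) ν :=
    integrable_finsetSum E fun x _ => (integrable_rnCocycle ν x).const_mul _
  have h0 : 0 ≤ fun b => ∑ x ∈ E, u x ^ 2 * rnCocycle ν x b := fun b =>
    sum_nonneg fun x _ => mul_nonneg (sq_nonneg _) (rnCocycle_nonneg ν x b)
  refine ⟨memLp_two_sqrt hint h0, ?_⟩
  unfold cocycleLift
  rw [eLpNorm_two_sqrt hint h0, integral_sum_mul_rnCocycle ν hq]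

lemma memLp_koopmanSumLift_and_eLpNorm_le (hq : ∀ γ : Λ, ν.map (γ • ·) ≪ ν) {C : Finset Λ}
    (hC : C.Nonempty) {M : ℝ} (hM : 0 ≤ M)
    (havg : ∀ h : B → ℂ, MemLp h 2 ν →
      eLpNorm (koopmanAverage ν C h) 2 ν ≤ ENNReal.ofReal M * eLpNorm h 2 ν)
    (E : Finset Λ) (u : Λ → ℝ) :
    MemLp (koopmanSumLift ν C E u) 2 ν ∧
      eLpNorm (koopmanSumLift ν C E u) 2 ν ≤ ENNReal.ofReal (#C * M * √(∑ x ∈ E, u x ^ 2)) := by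
  obtain ⟨hU, hU_norm⟩ := memLp_cocycleLift_and_eLpNorm_eq ν hq E u
  have hcard : (#C : ℂ) ≠ 0 := Nat.cast_ne_zero.2 hC.card_pos.ne'
  have hsum : eLpNorm (koopmanSumLift ν C E u) 2 ν = eLpNorm ((#C : ℝ) •
      koopmanAverage ν C (fun b => (cocycleLift ν E u b : ℂ))) 2 ν := by
    refine eLpNorm_congr_norm_ae (ae_of_all _ fun b => ?_)
    simp only [koopmanSumLift, Pi.smul_apply, Complex.real_smul, Complex.ofReal_natCast,
      koopmanAverage, koopman, mul_inv_cancel_left₀ hcard]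
    rw [← Complex.norm_real]
    push_cast
    rfl
  have hlift : eLpNorm (fun b => (cocycleLift ν E u b : ℂ)) 2 ν =
      ENNReal.ofReal √(∑ x ∈ E, u x ^ 2) := by
    rw [← hU_norm]
    exact eLpNorm_congr_norm_ae (ae_of_all _ fun b => Complex.norm_real _)
  have hle : eLpNorm (koopmanSumLift ν C E u) 2 ν ≤
      ENNReal.ofReal (#C * M * √(∑ x ∈ E, u x ^ 2)) := by
    rw [hsum, eLpNorm_const_smul, Real.enorm_natCast, ENNReal.ofReal_mul (by positivity),
      ENNReal.ofReal_mul (by positivity), ENNReal.ofReal_natCast, mul_assoc, ← hlift]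
    gcongr
    exact havg _ hU.ofReal
  exact ⟨⟨(measurable_koopmanSumLift ν C E u).aestronglyMeasurable,
    hle.trans_lt ENNReal.ofReal_lt_top⟩, hle⟩

lemma sum_div_harishChandra_le_integral (hq : ∀ γ : Λ, ν.map (γ • ·) ≪ ν)
    {C F E : Finset Λ} (hFE : ∀ γ ∈ C, ∀ g ∈ F, γ⁻¹ * g ∈ E) {u v : Λ → ℝ} (hu : 0 ≤ u)
    (hv : 0 ≤ v) (hφ : MemLp (koopmanSumLift ν C E u) 2 ν) :
    ∑ γ ∈ C, (∑ g ∈ F, u (γ⁻¹ * g) * v g) / harishChandra ν γ ≤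
      ∫ b, koopmanSumLift ν C E u b * cocycleLift ν F v b ∂ν := by
  have hΞ (γ : Λ) : 0 < harishChandra ν γ := harishChandra_pos ν (hq γ)
  have hsum : ∑ γ ∈ C, (∑ g ∈ F, u (γ⁻¹ * g) * v g) / harishChandra ν γ = ∫ b,
      ∑ g ∈ F, (∑ γ ∈ C, u (γ⁻¹ * g) * v g / harishChandra ν γ) * rnCocycle ν g b ∂ν := by
    rw [integral_sum_mul_rnCocycle ν hq, Finset.sum_comm]
    simp only [Finset.sum_div]
  rw [hsum]
  refine integral_mono_of_nonneg (ae_of_all _ fun b => sum_nonneg fun g _ => mul_nonneg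
    (sum_nonneg fun γ _ => div_nonneg (mul_nonneg (hu _) (hv _)) (hΞ γ).le)
    (rnCocycle_nonneg ν g b)) (hφ.integrable_mul (memLp_cocycleLift_and_eLpNorm_eq ν hq F v).1) ?_
  filter_upwards [(Filter.eventually_all_finset C).2 fun γ hγ =>
    sum_mul_rnCocycle_le_ae ν hq γ (hFE γ hγ) u v] with b hb
  calc ∑ g ∈ F, (∑ γ ∈ C, u (γ⁻¹ * g) * v g / harishChandra ν γ) * rnCocycle ν g b
      = ∑ γ ∈ C, (∑ g ∈ F, u (γ⁻¹ * g) * v g * rnCocycle ν g b) / harishChandra ν γ := by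
        simp only [Finset.sum_mul, Finset.sum_div]
        rw [Finset.sum_comm]
        exact sum_congr rfl fun γ _ => sum_congr rfl fun g _ => by ring
    _ ≤ ∑ γ ∈ C, √(rnCocycle ν γ b) * cocycleLift ν E u (γ⁻¹ • b) *
          cocycleLift ν F v b / harishChandra ν γ :=
        sum_le_sum fun γ hγ => div_le_div_of_nonneg_right (hb γ hγ) (hΞ γ).le
    _ = koopmanSumLift ν C E u b * cocycleLift ν F v b := by
        simp only [koopmanSumLift, Finset.sum_mul]
        exact sum_congr rfl fun γ _ => by ring

theorem sum_sum_le_of_eLpNorm_koopmanAverage_le (hq : ∀ γ : Λ, ν.map (γ • ·) ≪ ν)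
    {C : Finset Λ} (hC : C.Nonempty) {β M : ℝ} (hM : 0 ≤ M)
    (hβ : ∀ γ ∈ C, harishChandra ν γ ≤ β)
    (havg : ∀ h : B → ℂ, MemLp h 2 ν →
      eLpNorm (koopmanAverage ν C h) 2 ν ≤ ENNReal.ofReal M * eLpNorm h 2 ν)
    {F E : Finset Λ} (hFE : ∀ γ ∈ C, ∀ g ∈ F, γ⁻¹ * g ∈ E) {u v : Λ → ℝ} (hu : 0 ≤ u)
    (hv : 0 ≤ v) :
    ∑ γ ∈ C, ∑ g ∈ F, u (γ⁻¹ * g) * v g ≤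
      M * (β * #C) * √(∑ x ∈ E, u x ^ 2) * √(∑ g ∈ F, v g ^ 2) := by
  set U := √(∑ x ∈ E, u x ^ 2)
  set V := √(∑ g ∈ F, v g ^ 2)
  have hΞ (γ : Λ) : 0 < harishChandra ν γ := harishChandra_pos ν (hq γ)
  obtain ⟨hφ, hφ_norm⟩ := memLp_koopmanSumLift_and_eLpNorm_le ν hq hC hM havg E u
  obtain ⟨hV, hV_norm⟩ := memLp_cocycleLift_and_eLpNorm_eq ν hq F v
  have hpairing : ∫ b, koopmanSumLift ν C E u b * cocycleLift ν F v b ∂ν ≤ #C * M * U * V := by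
    rw [← ENNReal.ofReal_le_ofReal_iff (by positivity), ENNReal.ofReal_mul (by positivity)]
    calc ENNReal.ofReal (∫ b, koopmanSumLift ν C E u b * cocycleLift ν F v b ∂ν)
        ≤ eLpNorm (koopmanSumLift ν C E u) 2 ν * eLpNorm (cocycleLift ν F v) 2 ν :=
          ofReal_integral_mul_le_eLpNorm_mul_eLpNorm hφ.1 hV.1
      _ ≤ ENNReal.ofReal (#C * M * U) * ENNReal.ofReal V := by rw [hV_norm]; gcongr
  obtain ⟨γ₀, hγ₀⟩ := hC
  calc ∑ γ ∈ C, ∑ g ∈ F, u (γ⁻¹ * g) * v g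
      ≤ ∑ γ ∈ C, β * ((∑ g ∈ F, u (γ⁻¹ * g) * v g) / harishChandra ν γ) := by
        refine sum_le_sum fun γ hγ => ?_
        rw [mul_div_left_comm]
        refine le_mul_of_one_le_right (sum_nonneg fun g _ => mul_nonneg (hu _) (hv _)) ?_
        exact (one_le_div (hΞ γ)).2 (hβ γ hγ)
    _ ≤ β * (#C * M * U * V) := by
        rw [← Finset.mul_sum]
        exact mul_le_mul_of_nonneg_left
          ((sum_div_harishChandra_le_integral ν hq hFE hu hv hφ).trans hpairing)
          ((hΞ γ₀).le.trans (hβ γ₀ hγ₀))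
    _ = M * (β * #C) * U * V := by ring

theorem sum_sum_norm_mul_le_of_eLpNorm_koopmanAverage_le (hq : ∀ γ : Λ, ν.map (γ • ·) ≪ ν)
    {C : Finset Λ} (hC : C.Nonempty) {β M : ℝ} (hM : 0 ≤ M)
    (hβ : ∀ γ ∈ C, harishChandra ν γ ≤ β)
    (havg : ∀ h : B → ℂ, MemLp h 2 ν →
      eLpNorm (koopmanAverage ν C h) 2 ν ≤ ENNReal.ofReal M * eLpNorm h 2 ν)
    (ξ : lp (fun _ : Λ => ℂ) 2) (F : Finset Λ) {v : Λ → ℝ} (hv : 0 ≤ v) :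
    ∑ γ ∈ C, ∑ g ∈ F, ‖ξ (γ⁻¹ * g)‖ * v g ≤ M * (β * #C) * ‖ξ‖ * √(∑ g ∈ F, v g ^ 2) := by
  classical
  set E := (C ×ˢ F).image fun p => p.1⁻¹ * p.2
  obtain ⟨γ₀, hγ₀⟩ := hC
  have hβ0 : 0 ≤ β := (harishChandra_pos ν (hq γ₀)).le.trans (hβ γ₀ hγ₀)
  have hξ : √(∑ x ∈ E, ‖ξ x‖ ^ 2) ≤ ‖ξ‖ := by
    refine Real.sqrt_le_iff.2 ⟨norm_nonneg _, ?_⟩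
    simpa [Real.rpow_two] using lp.sum_rpow_le_norm_rpow (p := 2) (by norm_num) ξ E
  refine (sum_sum_le_of_eLpNorm_koopmanAverage_le ν hq ⟨γ₀, hγ₀⟩ hM hβ havg (E := E)
    (fun γ hγ g hg => mem_image.2 ⟨(γ, g), mem_product.2 ⟨hγ, hg⟩, rfl⟩)
    (fun x => norm_nonneg _) hv).trans ?_
  gcongr

end Koopman

theorem statement0
    {Λ : Type*} [Group Λ] (L : Λ → ℝ)
    (hint : ∀ γ : Λ, ∃ n : ℕ, L γ = n)
    (hfin : ∀ n : ℕ, {γ : Λ | L γ = n}.Finite)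
    {B : Type*} [MeasurableSpace B] (ν : Measure B) [IsProbabilityMeasure ν]
    [MulAction Λ B] (hmeas : ∀ γ : Λ, Measurable fun b : B => γ • b)
    (hqinv : ∀ γ : Λ, ν.map (fun b : B => γ • b) ≪ ν)
    (Ξ : Λ → ℝ)
    (hΞ : ∀ γ : Λ,
      Ξ γ = ∫ b, Real.sqrt (((ν.map (fun b' : B => γ • b')).rnDeriv ν b).toReal) ∂ν)
    (P : Polynomial ℝ)
    (h1 : ∀ n : ℕ, ∀ γ ∈ (hfin n).toFinset,
      Ξ γ ≤ P.eval (n : ℝ) / Real.sqrt ((hfin n).toFinset.card))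
    (M : ℝ)
    (h2 : ∀ n : ℕ, ((hfin n).toFinset).Nonempty → ∀ h : B → ℂ, MemLp h 2 ν →
      eLpNorm (fun b : B =>
          (((hfin n).toFinset.card : ℂ))⁻¹ *
            ∑ γ ∈ (hfin n).toFinset,
              ((Real.sqrt (((ν.map (fun b' : B => γ • b')).rnDeriv ν b).toReal) : ℂ) *
                  h (γ⁻¹ • b)) / ((Ξ γ : ℝ) : ℂ))
        2 ν ≤ ENNReal.ofReal M * eLpNorm h 2 ν) :
    Stmt0.HasRRD L := by
  obtain rfl : Ξ = harishChandra ν := funext hΞ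
  have : MeasurableConstSMul Λ B := ⟨hmeas⟩
  set t : Polynomial ℝ := Polynomial.C (max M 0) * P
  obtain ⟨Q, hQ⟩ := Polynomial.exists_sqrt_sum_range_sq_le t
  refine ⟨Q, fun f hf => ?_⟩
  obtain ⟨N, hfN, hN⟩ := Stmt0.exists_nat_lenOf_eq hint f
  rw [hfN]
  refine Stmt0.convOpNormLE_of_sum_norm_mul_le
    (mul_nonneg ((Real.sqrt_nonneg _).trans (hQ N)) (Real.sqrt_nonneg _)) fun ξ F v hv => ?_
  have hsphere (n : ℕ) (hn : (hfin n).toFinset.Nonempty) (F : Finset Λ) (v : Λ → ℝ) (hv : 0 ≤ v) :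
      ∑ γ ∈ (hfin n).toFinset, ∑ g ∈ F, ‖ξ (γ⁻¹ * g)‖ * v g ≤
        t.eval (n : ℝ) * √(#(hfin n).toFinset) * ‖ξ‖ * √(∑ g ∈ F, v g ^ 2) := by
    convert sum_sum_norm_mul_le_of_eLpNorm_koopmanAverage_le ν hqinv hn (le_max_right M 0)
      (h1 n) (fun h hh => (h2 n hn h hh).trans (by gcongr; exact le_max_left M 0)) ξ F hv
      using 2
    rw [Polynomial.eval_mul, Polynomial.eval_C, div_mul_eq_mul_div, mul_div_assoc, Real.div_sqrt]
    ring
  calc ∑ g ∈ F, ‖Stmt0.conv f ξ g‖ * v g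
      ≤ Stmt0.l2norm f * √(∑ n ∈ range (N + 1), t.eval (n : ℝ) ^ 2) * ‖ξ‖ *
          √(∑ g ∈ F, v g ^ 2) :=
        Stmt0.sum_norm_conv_mul_le hint hfin _ hf hN ξ hsphere F hv
    _ ≤ Q.eval (N : ℝ) * Stmt0.l2norm f * ‖ξ‖ * √(∑ g ∈ F, v g ^ 2) := by
        rw [mul_comm (Stmt0.l2norm f)]
        gcongr
        exacts [Real.sqrt_nonneg _, hQ N]
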